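/- Theorem 4.1, case B4. In addition to the common setup, assume all four regime pairs share the same drift and volatility: b_{ij} = b and σ_{ij} = σ for all i, j ∈ {1,2} (hence K_{11} = K_{12} = K_{21} = K_{22} =: K), and assume c12 < 0, c21 > 0, χ12 < 0, χ21 > 0, c12 + c21 > 0 and χ12 + χ21 > 0 (Condition B4). Then the quadruple v11(x) = K·x^γ − c12 + χ12, v12(x) = K·x^γ − c12, v21(x) = K·x^γ + χ12, v22(x) = K·x^γ solves the QVI system at every x > 0. -/

import Mathlib

/-- Generator of a one-dimensional geometric Brownian motion with drift `b` and
volatility `σ`: `(L v)(x) = (1/2)σ²x²v''(x) + b x v'(x)`. -/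
noncomputable def Lop (b σ : ℝ) (v : ℝ → ℝ) (x : ℝ) : ℝ :=
  (1/2) * σ^2 * x^2 * deriv (deriv v) x + b * x * deriv v x

/-- The quadruple `(v11, v12, v21, v22)` solves the Isaacs system of
quasi-variational inequalities at the point `x`, with profit `f(x) = x^γ`. -/
def solvesQVI (r γ c12 c21 χ12 χ21 b11 σ11 b12 σ12 b21 σ21 b22 σ22 : ℝ)
    (v11 v12 v21 v22 : ℝ → ℝ) (x : ℝ) : Prop :=
  max (min (r * v11 x - Lop b11 σ11 v11 x - x ^ γ) (v11 x - (v21 x - c12)))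
      (v11 x - (v12 x + χ12)) = 0 ∧
  max (min (r * v12 x - Lop b12 σ12 v12 x - x ^ γ) (v12 x - (v22 x - c12)))
      (v12 x - (v11 x + χ21)) = 0 ∧
  max (min (r * v21 x - Lop b21 σ21 v21 x - x ^ γ) (v21 x - (v11 x - c21)))
      (v21 x - (v22 x + χ12)) = 0 ∧
  max (min (r * v22 x - Lop b22 σ22 v22 x - x ^ γ) (v22 x - (v12 x - c21)))
      (v22 x - (v21 x + χ21)) = 0

/-
The candidates are translates `K x^γ + a` of the particular solution `K x^γ` of
`r v - L v = x^γ`. Since `L` annihilates constants, the continuation residual of `K x^γ + a`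
is `r a`, and every obstacle gap is a difference of constants, so the QVI system collapses to
four scalar `max`/`min` identities; Condition B4 gives exactly the signs they need.
-/

theorem Lop_add_const (b σ a : ℝ) (v : ℝ → ℝ) :
    Lop b σ (fun y => v y + a) = Lop b σ v := by
  funext x
  simp only [Lop, deriv_add_const']

theorem Lop_const_mul_rpow (b σ K γ : ℝ) {x : ℝ} (hx : 0 < x) :
    Lop b σ (fun y => K * y ^ γ) x = ((1/2) * σ^2 * γ * (γ - 1) + b * γ) * K * x ^ γ := by
  have hx2 : x ^ (2 : ℕ) * x ^ (γ - 1 - 1) = x ^ γ := by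
    rw [← Real.rpow_natCast, ← Real.rpow_add hx]; ring_nf
  have hx1 : x * x ^ (γ - 1) = x ^ γ := by
    rw [Real.rpow_sub_one hx.ne']; field_simp
  simp only [Lop, deriv_const_mul_field', Real.deriv_rpow_const']
  linear_combination (1/2) * σ^2 * K * γ * (γ - 1) * hx2 + b * K * γ * hx1

theorem resolvent_const_mul_rpow {r b σ γ K : ℝ}
    (hK : K * (r - b * γ + (1/2) * σ^2 * γ * (1 - γ)) = 1) {x : ℝ} (hx : 0 < x) :
    r * (K * x ^ γ) - Lop b σ (fun y => K * y ^ γ) x - x ^ γ = 0 := by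
  rw [Lop_const_mul_rpow b σ K γ hx]
  linear_combination x ^ γ * hK

theorem solvesQVI_of_add_const {r γ c12 c21 χ12 χ21 b σ a11 a12 a21 a22 x : ℝ}
    {w v11 v12 v21 v22 : ℝ → ℝ}
    (hw : r * w x - Lop b σ w x - x ^ γ = 0)
    (hv11 : ∀ y, v11 y = w y + a11) (hv12 : ∀ y, v12 y = w y + a12)
    (hv21 : ∀ y, v21 y = w y + a21) (hv22 : ∀ y, v22 y = w y + a22)
    (h11 : max (min (r * a11) (a11 - (a21 - c12))) (a11 - (a12 + χ12)) = 0)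
    (h12 : max (min (r * a12) (a12 - (a22 - c12))) (a12 - (a11 + χ21)) = 0)
    (h21 : max (min (r * a21) (a21 - (a11 - c21))) (a21 - (a22 + χ12)) = 0)
    (h22 : max (min (r * a22) (a22 - (a12 - c21))) (a22 - (a21 + χ21)) = 0) :
    solvesQVI r γ c12 c21 χ12 χ21 b σ b σ b σ b σ v11 v12 v21 v22 x := by
  obtain rfl : v11 = _ := funext hv11
  obtain rfl : v12 = _ := funext hv12
  obtain rfl : v21 = _ := funext hv21
  obtain rfl : v22 = _ := funext hv22
  have hshift (a : ℝ) : r * (w x + a) - Lop b σ (fun y => w y + a) x - x ^ γ = r * a := by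
    rw [Lop_add_const]; linear_combination hw
  refine ⟨?_, ?_, ?_, ?_⟩ <;> simp only [hshift]
  · convert h11 using 2 <;> ring_nf
  · convert h12 using 2 <;> ring_nf
  · convert h21 using 2 <;> ring_nf
  · convert h22 using 2 <;> ring_nf

theorem thm4_1_B4_general
    (r γ c12 c21 χ12 χ21 : ℝ)
    (b11 σ11 b12 σ12 b21 σ21 b22 σ22 : ℝ)
    (K11 : ℝ)
    (hr : 0 < r)
    (hd11 : 0 < r - b11*γ + (1/2)*σ11^2*γ*(1-γ))
    (hK11 : K11 = 1/(r - b11*γ + (1/2)*σ11^2*γ*(1-γ)))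
    (heqb12 : b12 = b11) (heqb21 : b21 = b11) (heqb22 : b22 = b11)
    (heqσ12 : σ12 = σ11) (heqσ21 : σ21 = σ11) (heqσ22 : σ22 = σ11)
    (K : ℝ) (hK : K = K11)
    (hc12 : c12 < 0) (hχ12 : χ12 < 0)
    (hcsum : 0 < c12 + c21) (hχsum : 0 < χ12 + χ21)
    :
    ∀ x : ℝ, 0 < x →
      solvesQVI r γ c12 c21 χ12 χ21 b11 σ11 b12 σ12 b21 σ21 b22 σ22
        (fun y => K * y ^ γ - c12 + χ12)
        (fun y => K * y ^ γ - c12)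
        (fun y => K * y ^ γ + χ12)
        (fun y => K * y ^ γ) x := by
  intro x hx
  subst b12 b21 b22 σ12 σ21 σ22
  have hKD : K * (r - b11*γ + (1/2)*σ11^2*γ*(1-γ)) = 1 := by
    rw [hK, hK11, one_div_mul_cancel hd11.ne']
  refine solvesQVI_of_add_const (w := fun y => K * y ^ γ) (a11 := χ12 - c12) (a12 := -c12)
    (a21 := χ12) (a22 := 0) (resolvent_const_mul_rpow hKD hx)
    (fun y => by ring) (fun y => by ring) (fun y => by ring) (fun y => by ring) ?_ ?_ ?_ ?_
  · rw [sub_self, show χ12 - c12 - (-c12 + χ12) = 0 by ring]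
    exact max_eq_right (min_le_right _ _)
  · rw [show -c12 - (0 - c12) = 0 by ring, min_eq_right (mul_nonneg hr.le (neg_nonneg.2 hc12.le)),
      max_eq_left (by linarith)]
  · rw [show χ12 - (0 + χ12) = 0 by ring]
    exact max_eq_right ((min_le_left _ _).trans (mul_nonpos_of_nonneg_of_nonpos hr.le hχ12.le))
  · rw [mul_zero, min_eq_left (by linarith), max_eq_left (by linarith)]

theorem thm4_1_B4
    (r γ c12 c21 χ12 χ21 : ℝ)
    (b11 σ11 b12 σ12 b21 σ21 b22 σ22 : ℝ)
    (K11 K12 K21 K22 : ℝ)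
    (hr : 0 < r) (hγ0 : 0 < γ) (hγ1 : γ < 1)
    (hσ11 : 0 < σ11) (hσ12 : 0 < σ12) (hσ21 : 0 < σ21) (hσ22 : 0 < σ22)
    (hd11 : 0 < r - b11*γ + (1/2)*σ11^2*γ*(1-γ))
    (hd12 : 0 < r - b12*γ + (1/2)*σ12^2*γ*(1-γ))
    (hd21 : 0 < r - b21*γ + (1/2)*σ21^2*γ*(1-γ))
    (hd22 : 0 < r - b22*γ + (1/2)*σ22^2*γ*(1-γ))
    (hrb11 : b11 < r) (hrb12 : b12 < r) (hrb21 : b21 < r) (hrb22 : b22 < r)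
    (hK11 : K11 = 1/(r - b11*γ + (1/2)*σ11^2*γ*(1-γ)))
    (hK12 : K12 = 1/(r - b12*γ + (1/2)*σ12^2*γ*(1-γ)))
    (hK21 : K21 = 1/(r - b21*γ + (1/2)*σ21^2*γ*(1-γ)))
    (hK22 : K22 = 1/(r - b22*γ + (1/2)*σ22^2*γ*(1-γ)))
    (heqb12 : b12 = b11) (heqb21 : b21 = b11) (heqb22 : b22 = b11)
    (heqσ12 : σ12 = σ11) (heqσ21 : σ21 = σ11) (heqσ22 : σ22 = σ11)
    (K : ℝ) (hK : K = K11)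
    (hc12 : c12 < 0) (hc21 : 0 < c21) (hχ12 : χ12 < 0) (hχ21 : 0 < χ21)
    (hcsum : 0 < c12 + c21) (hχsum : 0 < χ12 + χ21)
    :
    ∀ x : ℝ, 0 < x →
      solvesQVI r γ c12 c21 χ12 χ21 b11 σ11 b12 σ12 b21 σ21 b22 σ22
        (fun y => K * y ^ γ - c12 + χ12)
        (fun y => K * y ^ γ - c12)
        (fun y => K * y ^ γ + χ12)
        (fun y => K * y ^ γ) x :=
  thm4_1_B4_general r γ c12 c21 χ12 χ21 b11 σ11 b12 σ12 b21 σ21 b22 σ22 K11 hr hd11 hK11 heqb12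
    heqb21 heqb22 heqσ12 heqσ21 heqσ22 K hK hc12 hχ12 hcsum hχsum
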